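/- arXiv:1607.00819 — 2 statements merged into one kernel-verified Lean document; each statement's English description precedes it below -/
import Mathlib

section
/- Let (A, R, N) be an AFN. A set X ⊆ A is a stable extension of (A, R, N) (i.e. X is complete and X^+ = A \ X) if and only if X is strongly coherent and X^att = A \ X. -/
open Classical

universe u

namespace Dialectical

variable {α : Type u}

/-! ### Two-valued (partial) interpretations -/

/-- A partial two-valued interpretation: `some true` = t, `some false` = f, `none` = undefined. -/
abbrev Interp (α : Type u) := α → Option Bool

/-- The domain of an interpretation. -/
def idom (v : Interp α) : Set α := {a | v a ≠ none}

/-- The set of arguments mapped to t. -/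
def tset (v : Interp α) : Set α := {a | v a = some true}

/-- The set of arguments mapped to f. -/
def fset (v : Interp α) : Set α := {a | v a = some false}

/-- `w` is a completion of `v` to the set `Z`. -/
def Completion (v w : Interp α) (Z : Set α) : Prop :=
  idom w = Z ∧ ∀ a ∈ idom v, w a = v a

/-- The interpretation assigning t on `T` and f on `F' \ T`. -/
noncomputable def mkInterp (T F' : Set α) : Interp α :=
  fun a => if a ∈ T then some true else if a ∈ F' then some false else none

/-! ### Abstract dialectical frameworks -/

/-- An abstract dialectical framework: links and acceptance conditions
(`true` = in, `false` = out). -/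
structure ADF (α : Type u) where
  L : α → α → Prop
  C : α → Set α → Bool

namespace ADF

variable (D : ADF α)

/-- The parents of an argument. -/
def par (a : α) : Set α := {p | D.L p a}

/-- Evaluating the acceptance condition of `s` under an interpretation. -/
def evalCond (s : α) (w : Interp α) : Bool := D.C s (tset w ∩ D.par s)

/-- `s` is decisively in w.r.t. `v`. -/
def DecisivelyIn (v : Interp α) (s : α) : Prop :=
  ∀ w : Interp α, Completion v w (idom v ∪ D.par s) → D.evalCond s w = true

/-- `s` is decisively out w.r.t. `v`. -/
def DecisivelyOut (v : Interp α) (s : α) : Prop :=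
  ∀ w : Interp α, Completion v w (idom v ∪ D.par s) → D.evalCond s w = false

/-- `v` is a minimal decisively in interpretation for `s` (`v ∈ min_dec(in,s)`). -/
def MinDecIn (v : Interp α) (s : α) : Prop :=
  D.DecisivelyIn v s ∧
  ∀ w : Interp α, D.DecisivelyIn w s → tset w ⊆ tset v → fset w ⊆ fset v →
    tset w = tset v ∧ fset w = fset v

/-- `pd` is a positive dependency function on `X`. -/
def PDFun (X : Set α) (pd : α → Option (Interp α)) : Prop :=
  ∀ a ∈ X,
    (∀ v, pd a = some v → D.MinDecIn v a ∧ tset v ⊆ X) ∧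
    (pd a = none → ¬ ∃ v, D.MinDecIn v a ∧ tset v ⊆ X)

end ADF

/-- The subset of `X` on which `pd` is non-null. -/
def soundDom (X : Set α) (pd : α → Option (Interp α)) : Set α :=
  {a ∈ X | pd a ≠ none}

namespace ADF
variable (D : ADF α)

/-- `pd` is a maximally sound pd-function of `X`. -/
def MaxSound (X : Set α) (pd : α → Option (Interp α)) : Prop :=
  D.PDFun X pd ∧
  ¬ ∃ (X'' : Set α) (pd' : α → Option (Interp α)),
      D.PDFun X'' pd' ∧ (∀ a ∈ X'', pd' a ≠ none) ∧
      soundDom X pd ⊂ X'' ∧ X'' ⊆ X ∧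
      ∀ a ∈ soundDom X pd, pd' a = pd a

end ADF

/-- The t-part of the interpretation assigned by `pd` to `a`. -/
def pdT (pd : α → Option (Interp α)) (a : α) : Set α :=
  {b | ∃ v, pd a = some v ∧ b ∈ tset v}

/-- The f-part of the interpretation assigned by `pd` to `a`. -/
def pdF (pd : α → Option (Interp α)) (a : α) : Set α :=
  {b | ∃ v, pd a = some v ∧ b ∈ fset v}

/-- `(Fs, G, B)` is a partially acyclic positive dependency evaluation for `x`
based on the pd-function `pd` of `X`. -/
def IsPAEvalWith (pd : α → Option (Interp α)) (X : Set α)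
    (x : α) (Fs : Set α) (G : List α) (B : Set α) : Prop :=
  (∀ a ∈ G, a ∉ Fs) ∧ G.Nodup ∧
  x ∈ X ∧ Fs ⊆ X ∧ (∀ a ∈ G, a ∈ X) ∧
  (∀ a ∈ Fs, pd a ≠ none) ∧ (∀ a ∈ G, pd a ≠ none) ∧
  (G = [] → x ∈ Fs) ∧ (G ≠ [] → G.getLast? = some x) ∧
  (∀ i : ℕ, ∀ h : i < G.length,
      pdT pd (G.get ⟨i, h⟩) ⊆
        Fs ∪ {b | ∃ j : ℕ, ∃ hj : j < G.length, j < i ∧ G.get ⟨j, hj⟩ = b}) ∧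
  (∀ a ∈ Fs, pdT pd a ⊆ Fs) ∧
  (∀ a ∈ Fs, ∃ b ∈ Fs, a ∈ pdT pd b) ∧
  B = (⋃ a ∈ Fs, pdF pd a) ∪ ⋃ a ∈ {c | c ∈ G}, pdF pd a

namespace ADF
variable (D : ADF α)

/-- `(Fs, G, B)` is a partially acyclic positive dependency evaluation for `x` on `X`. -/
def PAEval (X : Set α) (x : α) (Fs : Set α) (G : List α) (B : Set α) : Prop :=
  ∃ pd, D.MaxSound X pd ∧ IsPAEvalWith pd X x Fs G B

/-- `(G, B)` is an acyclic positive dependency evaluation for `x` on `X`. -/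
def AcyclicEval (X : Set α) (x : α) (G : List α) (B : Set α) : Prop :=
  D.PAEval X x ∅ G B

/-- The standard discarded set `X⁺`. -/
def stdDiscarded (X : Set α) : Set α :=
  {a | ∀ Fs G B, D.PAEval Set.univ a Fs G B → (B ∩ X).Nonempty}

/-- The partially acyclic discarded set `X^{p+}`. -/
def pDiscarded (X : Set α) : Set α :=
  {a | ¬ ∃ Fs G B, D.PAEval Set.univ a Fs G B ∧ Fs ⊆ X ∧ B ∩ X = ∅}

/-- The acyclic discarded set `X^{a+}`. -/
def aDiscarded (X : Set α) : Set α :=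
  {a | ∀ G B, D.AcyclicEval Set.univ a G B → (B ∩ X).Nonempty}

/-- The standard range of `X`. -/
noncomputable def stdRange (X : Set α) : Interp α := mkInterp X (D.stdDiscarded X \ X)

/-- The partially acyclic range of `X`. -/
noncomputable def pRange (X : Set α) : Interp α := mkInterp X (D.pDiscarded X \ X)

/-- The acyclic range of `X`. -/
noncomputable def aRange (X : Set α) : Interp α := mkInterp X (D.aDiscarded X \ X)

/-- Conflict-freeness in an ADF. -/
def ConflictFree (X : Set α) : Prop := ∀ s ∈ X, D.C s (X ∩ D.par s) = true

/-- pd-acyclic conflict-freeness in an ADF. -/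
def PDAcyclicCF (X : Set α) : Prop :=
  ∀ a ∈ X, ∃ G B, D.AcyclicEval X a G B ∧ B ∩ X = ∅

def CCAdmissible (X : Set α) : Prop :=
  D.ConflictFree X ∧ ∀ e ∈ X, D.DecisivelyIn (D.stdRange X) e

def CA2Admissible (X : Set α) : Prop :=
  D.ConflictFree X ∧ ∀ e ∈ X, D.DecisivelyIn (D.pRange X) e

def AAAdmissible (X : Set α) : Prop :=
  D.PDAcyclicCF X ∧ ∀ e ∈ X, D.DecisivelyIn (D.aRange X) e

def CCComplete (X : Set α) : Prop :=
  D.CCAdmissible X ∧ ∀ e, D.DecisivelyIn (D.stdRange X) e → e ∈ X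

def CA2Complete (X : Set α) : Prop :=
  D.CA2Admissible X ∧ ∀ e, D.DecisivelyIn (D.pRange X) e → e ∈ X

def AAComplete (X : Set α) : Prop :=
  D.AAAdmissible X ∧ ∀ e, D.DecisivelyIn (D.aRange X) e → e ∈ X

def CCPreferred (X : Set α) : Prop :=
  D.CCAdmissible X ∧ ∀ Y, D.CCAdmissible Y → X ⊆ Y → X = Y

def CA2Preferred (X : Set α) : Prop :=
  D.CA2Admissible X ∧ ∀ Y, D.CA2Admissible Y → X ⊆ Y → X = Y

def AAPreferred (X : Set α) : Prop :=
  D.AAAdmissible X ∧ ∀ Y, D.AAAdmissible Y → X ⊆ Y → X = Y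

/-- `X` is a model of the ADF. -/
def IsModel (X : Set α) : Prop :=
  D.ConflictFree X ∧ ∀ a, a ∉ X → D.C a (X ∩ D.par a) = false

/-- `X` is a stable extension of the ADF. -/
def IsStable (X : Set α) : Prop :=
  D.PDAcyclicCF X ∧ D.aDiscarded X = Xᶜ

/-- `X` is the grounded extension (the least cc-complete extension). -/
def IsGrounded (X : Set α) : Prop :=
  D.CCComplete X ∧ ∀ Y, D.CCComplete Y → X ⊆ Y

/-- `X` is the acyclic grounded extension (the least aa-complete extension). -/
def IsAcyclicGrounded (X : Set α) : Prop :=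
  D.AAComplete X ∧ ∀ Y, D.AAComplete Y → X ⊆ Y

/-- The link `(r,s)` is supporting. -/
def Supporting (r s : α) : Prop :=
  ¬ ∃ R' ⊆ D.par s, D.C s R' = true ∧ D.C s (R' ∪ {r}) = false

/-- The link `(r,s)` is attacking. -/
def Attacking (r s : α) : Prop :=
  ¬ ∃ R' ⊆ D.par s, D.C s R' = false ∧ D.C s (R' ∪ {r}) = true

/-- Bipolar ADFs. -/
def IsBADF : Prop := ∀ r s, D.L r s → D.Supporting r s ∨ D.Attacking r s

/-- Positive dependency acyclic ADFs (AADF⁺): every partially acyclic evaluation is acyclic. -/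
def IsAADFplus : Prop := ∀ X x Fs G B, D.PAEval X x Fs G B → Fs = ∅

end ADF

/-! ### Frameworks with sets of attacking arguments (SETAFs) -/

/-- A framework with sets of attacking arguments. -/
structure SETAF (α : Type u) where
  R : Set α → α → Prop
  nonempty_of_R : ∀ S a, R S a → S.Nonempty

namespace SETAF

variable (sf : SETAF α)

/-- `X` is conflict-free in the SETAF. -/
def ConflictFree (X : Set α) : Prop := ¬ ∃ S ⊆ X, ∃ a ∈ X, sf.R S a

/-- The discarded set of `X` in the SETAF. -/
def discarded (X : Set α) : Set α := {b | ∃ S ⊆ X, sf.R S b}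

/-- `X` defends `a` in the SETAF. -/
def Defends (X : Set α) (a : α) : Prop :=
  ∀ S, sf.R S a → ∃ s ∈ S, s ∈ sf.discarded X

def Admissible (X : Set α) : Prop := sf.ConflictFree X ∧ ∀ a ∈ X, sf.Defends X a

def Complete (X : Set α) : Prop := sf.Admissible X ∧ ∀ a, sf.Defends X a → a ∈ X

def Preferred (X : Set α) : Prop :=
  sf.Admissible X ∧ ∀ Y, sf.Admissible Y → X ⊆ Y → X = Y

/-- `X` is the grounded extension: the least complete extension. -/
def IsGrounded (X : Set α) : Prop := sf.Complete X ∧ ∀ Y, sf.Complete Y → X ⊆ Y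

def Stable (X : Set α) : Prop := sf.ConflictFree X ∧ sf.discarded X = Xᶜ

/-- The ADF corresponding to a SETAF. -/
noncomputable def toADF : ADF α where
  L x y := ∃ B : Set α, x ∈ B ∧ sf.R B y
  C a B := decide (¬ ∃ S, sf.R S a ∧ S ⊆ B)

end SETAF

/-! ### Extended argumentation frameworks with collective defense attacks (EAFCs) -/

/-- An EAFC: binary attacks `R` and collective defense attacks `D` on attacks. -/
structure EAFC (α : Type u) where
  R : α → α → Prop
  D : Set α → α → α → Prop
  nonempty_of_D : ∀ C a b, D C a b → C.Nonempty
  attack_of_D : ∀ C a b, D C a b → R a b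

namespace EAFC

variable (E : EAFC α)

/-- `a` defeats `b` w.r.t. `X`. -/
def Defeats (X : Set α) (a b : α) : Prop :=
  E.R a b ∧ ¬ ∃ C ⊆ X, E.D C a b

/-- `RS` is a reinstatement set on `X` for the defeat of `b` by `a`. -/
def Reinstatement (X : Set α) (RS : Set (α × α)) (a b : α) : Prop :=
  RS.Finite ∧
  (∀ p ∈ RS, p.1 ∈ X ∧ E.Defeats X p.1 p.2) ∧
  (a, b) ∈ RS ∧
  ∀ p ∈ RS, ∀ C : Set α, E.D C p.1 p.2 → ∃ q ∈ RS, q.2 ∈ C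

/-- The discarded set `X⁺` of `X` in the EAFC. -/
def discarded (X : Set α) : Set α :=
  {b | ∃ a ∈ X, E.Defeats X a b ∧ ∃ RS, E.Reinstatement X RS a b}

/-- `X` defends `a` in the EAFC. -/
def Defends (X : Set α) (a : α) : Prop :=
  ∀ b, E.Defeats X b a → b ∈ E.discarded X

/-- `X` is conflict-free in the EAFC. -/
def ConflictFree (X : Set α) : Prop := ¬ ∃ a ∈ X, ∃ b ∈ X, E.Defeats X a b

def Admissible (X : Set α) : Prop := E.ConflictFree X ∧ ∀ a ∈ X, E.Defends X a

def Complete (X : Set α) : Prop := E.Admissible X ∧ ∀ a, E.Defends X a → a ∈ X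

def Preferred (X : Set α) : Prop :=
  E.Admissible X ∧ ∀ Y, E.Admissible Y → X ⊆ Y → X = Y

def Stable (X : Set α) : Prop :=
  E.ConflictFree X ∧ ∀ b, b ∉ X → ∃ a ∈ X, E.Defeats X a b

/-- The characteristic function of the EAFC. -/
def charFun (X : Set α) : Set α := {a | E.Defends X a}

/-- The grounded extension of the EAFC. -/
def grounded : Set α := ⋃ i : ℕ, E.charFun^[i] ∅

/-- Every argument has finitely many attackers, every attack finitely many defense attackers. -/
def Finitary : Prop :=
  (∀ a, {b | E.R b a}.Finite) ∧ ∀ a b, {C | E.D C a b}.Finite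

/-- Strong consistency of an EAFC. -/
def StronglyConsistent : Prop :=
  ¬ ∃ (x y z : α) (X : Set α), E.R x y ∧ x ∈ X ∧ E.D X z y

/-- The EAFC is bounded hierarchical. -/
def BoundedHierarchical : Prop :=
  ∃ n : ℕ, ∃ hn : 0 < n,
    ∃ (As : Fin n → Set α) (Rs : Fin n → α → α → Prop)
      (Ds : Fin n → Set α → α → α → Prop),
      (∀ C a b, ¬ Ds ⟨n - 1, Nat.sub_lt hn one_pos⟩ C a b) ∧
      (Set.univ = ⋃ i, As i) ∧
      (∀ a b, E.R a b ↔ ∃ i, Rs i a b) ∧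
      (∀ C a b, E.D C a b ↔ ∃ i, Ds i C a b) ∧
      (∀ i a b, Rs i a b → a ∈ As i ∧ b ∈ As i) ∧
      (∀ i C a b, Ds i C a b → Rs i a b ∧
        ∃ h : (i : ℕ) + 1 < n, C ⊆ As ⟨(i : ℕ) + 1, h⟩)

/-- The ADF corresponding to a strongly consistent EAFC. -/
noncomputable def toADF : ADF α where
  L a b := E.R a b ∨ ∃ (c : α) (X : Set α), a ∈ X ∧ E.D X c b
  C a B := decide (¬ ∃ x ∈ B, E.R x a ∧ ¬ ∃ B' ⊆ B, E.D B' x a)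

end EAFC

/-! ### Argumentation frameworks with necessities (AFNs) -/

/-- An AFN: binary attacks `R` and necessity relation `N`. -/
structure AFN (α : Type u) where
  R : α → α → Prop
  N : Set α → α → Prop
  nonempty_of_N : ∀ B a, N B a → B.Nonempty

namespace AFN

variable (fn : AFN α)

/-- `G` is a powerful sequence for `a` on `X`. -/
def PowerfulSeq (X : Set α) (G : List α) (a : α) : Prop :=
  G ≠ [] ∧ (∀ b ∈ G, b ∈ X) ∧ G.getLast? = some a ∧
  ∀ i : ℕ, ∀ h : i < G.length, ∀ B : Set α, fn.N B (G.get ⟨i, h⟩) →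
    ∃ j : ℕ, ∃ hj : j < G.length, j < i ∧ G.get ⟨j, hj⟩ ∈ B

/-- `a` is powerful in `X`. -/
def Powerful (X : Set α) (a : α) : Prop :=
  a ∈ X ∧ ∃ G, fn.PowerfulSeq X G a

/-- `X` is coherent. -/
def Coherent (X : Set α) : Prop := ∀ a ∈ X, fn.Powerful X a

/-- The discarded set `X^att` of `X` in the AFN. -/
def discardedAtt (X : Set α) : Set α :=
  {a | ∀ C, fn.Coherent C → a ∈ C → ∃ c ∈ C, ∃ e ∈ X, fn.R e c}

/-- `X` is conflict-free in the AFN. -/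
def ConflictFree (X : Set α) : Prop := ¬ ∃ a ∈ X, ∃ b ∈ X, fn.R a b

/-- `X` is strongly coherent. -/
def StronglyCoherent (X : Set α) : Prop := fn.ConflictFree X ∧ fn.Coherent X

/-- The deactivated set `X⁺` of `X` in the AFN. -/
def deactivated (X : Set α) : Set α :=
  {a | (∃ e ∈ X, fn.R e a) ∨ ∃ B, fn.N B a ∧ X ∩ B = ∅}

/-- `X` defends `a` in the AFN. -/
def Defends (X : Set α) (a : α) : Prop :=
  fn.Coherent (X ∪ {a}) ∧ ∀ b, fn.R b a → b ∈ fn.discardedAtt X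

def Admissible (X : Set α) : Prop := fn.StronglyCoherent X ∧ ∀ a ∈ X, fn.Defends X a

def Complete (X : Set α) : Prop := fn.Admissible X ∧ ∀ a, fn.Defends X a → a ∈ X

def Preferred (X : Set α) : Prop :=
  fn.Admissible X ∧ ∀ Y, fn.Admissible Y → X ⊆ Y → X = Y

/-- `X` is the grounded extension: the least complete extension. -/
def IsGrounded (X : Set α) : Prop := fn.Complete X ∧ ∀ Y, fn.Complete Y → X ⊆ Y

/-- Stability via completeness and the deactivated set. -/
def Stable (X : Set α) : Prop := fn.Complete X ∧ fn.deactivated X = Xᶜ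

/-- Stability via strong coherence and the discarded set. -/
def StableAtt (X : Set α) : Prop :=
  fn.StronglyCoherent X ∧ fn.discardedAtt X = Xᶜ

/-- Strong consistency of an AFN: no argument is both supported and attacked by
the same argument. -/
def StronglyConsistent : Prop :=
  ∀ a : α, {b | ∃ B, b ∈ B ∧ fn.N B a} ∩ {b | fn.R b a} = ∅

/-- The ADF corresponding to a strongly consistent AFN. -/
noncomputable def toADF : ADF α where
  L x y := fn.R x y ∨ ∃ B, x ∈ B ∧ fn.N B y
  C a P := decide (¬ ((∃ p ∈ P, fn.R p a) ∨ ∃ Z, fn.N Z a ∧ Z ∩ P = ∅))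

end AFN

end Dialectical

/-! If every argument outside a strongly coherent `X` is deactivated, take a powerful sequence
of a coherent set through some `a ∉ X`: its first member outside `X` has all its necessities met
by earlier members, which lie in `X`, so it must be attacked by `X`; hence `A \ X ⊆ X^att`.
Conversely, if `a ∉ X` is not deactivated, every necessity of `a` meets `X`; since `A` is finite,
one list enumerates `X` in a powerful order, and appending `a` shows `X ∪ {a}` coherent, so
`a ∈ X^att` forces an attack from `X` on `X ∪ {a}`, which is impossible. With `X^att = A \ X`,
completeness follows at once from conflict-freeness. -/

namespace Dialectical.AFN

variable {α : Type*} (fn : AFN α)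

def Supported (G : List α) : Prop :=
  ∀ i (h : i < G.length) B, fn.N B G[i] → ∃ b ∈ G.take i, b ∈ B

variable {fn}

theorem supported_nil : fn.Supported [] := fun _ h => absurd h (Nat.not_lt_zero _)

theorem supported_append_singleton_iff {L : List α} {a : α} :
    fn.Supported (L ++ [a]) ↔ fn.Supported L ∧ ∀ B, fn.N B a → ∃ b ∈ L, b ∈ B := by
  constructor
  · intro h
    refine ⟨fun i hi B hB => ?_, fun B hB => ?_⟩
    · have := h i (by simp; omega) B (by rwa [List.getElem_append_left hi])
      rwa [List.take_append_of_le_length hi.le] at this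
    · have := h L.length (by simp) B (by simpa using hB)
      rwa [List.take_left' rfl] at this
  · rintro ⟨hL, ha⟩ i hi B hB
    rcases Nat.lt_or_ge i L.length with hi' | hi'
    · rw [List.getElem_append_left hi'] at hB
      rw [List.take_append_of_le_length hi'.le]
      exact hL i hi' B hB
    · obtain rfl : i = L.length := by simp at hi; omega
      rw [List.take_left' rfl]
      exact ha B (by simpa using hB)

theorem Supported.append {L₁ L₂ : List α} (h₁ : fn.Supported L₁) (h₂ : fn.Supported L₂) :
    fn.Supported (L₁ ++ L₂) := by
  induction L₂ using List.reverseRecOn with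
  | nil => simpa using h₁
  | append_singleton L₂ a ih =>
    rw [supported_append_singleton_iff] at h₂
    rw [← List.append_assoc, supported_append_singleton_iff]
    refine ⟨ih h₂.1, fun B hB => ?_⟩
    obtain ⟨b, hb, hbB⟩ := h₂.2 B hB
    exact ⟨b, List.mem_append_right _ hb, hbB⟩

theorem Supported.exists_notMem_forall_inter_nonempty {G : List α} {X : Set α}
    (hG : fn.Supported G) (h : ∃ g ∈ G, g ∉ X) :
    ∃ g ∈ G, g ∉ X ∧ ∀ B, fn.N B g → (X ∩ B).Nonempty := by
  induction G using List.reverseRecOn with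
  | nil => simp at h
  | append_singleton L a ih =>
    rw [supported_append_singleton_iff] at hG
    by_cases hL : ∃ g ∈ L, g ∉ X
    · obtain ⟨g, hg, hgX, hgB⟩ := ih hG.1 hL
      exact ⟨g, List.mem_append_left _ hg, hgX, hgB⟩
    · push Not at hL
      obtain ⟨g, hg, hgX⟩ := h
      obtain rfl : g = a := by
        rcases List.mem_append.1 hg with hg | hg
        · exact absurd (hL g hg) hgX
        · simpa using hg
      refine ⟨g, by simp, hgX, fun B hB => ?_⟩
      obtain ⟨b, hb, hbB⟩ := hG.2 B hB
      exact ⟨b, hL b hb, hbB⟩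

theorem powerfulSeq_iff {X : Set α} {G : List α} {a : α} :
    fn.PowerfulSeq X G a ↔ (∃ L, G = L ++ [a]) ∧ (∀ b ∈ G, b ∈ X) ∧ fn.Supported G := by
  have hlast : (G ≠ [] ∧ G.getLast? = some a) ↔ ∃ L, G = L ++ [a] := by
    rw [List.getLast?_eq_some_iff]
    exact ⟨fun h => h.2, fun ⟨L, hL⟩ => ⟨by simp [hL], L, hL⟩⟩
  have hprefix : ∀ (i : ℕ) (B : Set α), (∃ j, ∃ hj : j < G.length, j < i ∧ G[j] ∈ B) ↔
      ∃ b ∈ G.take i, b ∈ B := by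
    intro i B
    simp only [List.mem_take_iff_getElem]
    constructor
    · rintro ⟨j, hj, hji, hjB⟩
      exact ⟨_, ⟨j, by omega, rfl⟩, hjB⟩
    · rintro ⟨_, ⟨j, hj, rfl⟩, hjB⟩
      exact ⟨j, by omega, by omega, hjB⟩
  simp only [PowerfulSeq, Supported, List.get_eq_getElem, hprefix, ← hlast]
  tauto

theorem Powerful.mono {X Y : Set α} {a : α} (h : fn.Powerful X a) (hXY : X ⊆ Y) :
    fn.Powerful Y a := by
  obtain ⟨haX, G, hne, hGX, hlast, hG⟩ := h
  exact ⟨hXY haX, G, hne, fun b hb => hXY (hGX b hb), hlast, hG⟩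

theorem Powerful.inter_nonempty_of_N {X B : Set α} {a : α} (ha : fn.Powerful X a)
    (hB : fn.N B a) : (X ∩ B).Nonempty := by
  obtain ⟨-, G, hG⟩ := ha
  obtain ⟨⟨L, rfl⟩, hGX, hGS⟩ := powerfulSeq_iff.1 hG
  obtain ⟨b, hb, hbB⟩ := (supported_append_singleton_iff.1 hGS).2 B hB
  exact ⟨b, hGX b (List.mem_append_left _ hb), hbB⟩

theorem Coherent.exists_supported_cover [Finite α] {X : Set α} (hX : fn.Coherent X) :
    ∃ L, fn.Supported L ∧ (∀ b ∈ L, b ∈ X) ∧ ∀ x ∈ X, x ∈ L := by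
  suffices h : ∀ s : Finset α, ↑s ⊆ X →
      ∃ L, fn.Supported L ∧ (∀ b ∈ L, b ∈ X) ∧ ∀ x ∈ s, x ∈ L by
    obtain ⟨L, hL, hLX, hXL⟩ := h (Set.toFinite X).toFinset (by simp)
    exact ⟨L, hL, hLX, fun x hx => hXL x (by simpa using hx)⟩
  intro s
  induction s using Finset.induction_on with
  | empty => exact fun _ => ⟨[], supported_nil, by simp, by simp⟩
  | insert x s _ ih =>
    intro hs
    rw [Finset.coe_insert, Set.insert_subset_iff] at hs
    obtain ⟨L, hL, hLX, hsL⟩ := ih hs.2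
    obtain ⟨-, G, hG⟩ := hX x hs.1
    obtain ⟨⟨G', rfl⟩, hGX, hGS⟩ := powerfulSeq_iff.1 hG
    refine ⟨L ++ (G' ++ [x]), hL.append hGS, ?_, ?_⟩
    · intro b hb
      rcases List.mem_append.1 hb with hb | hb
      exacts [hLX b hb, hGX b hb]
    · simp only [Finset.mem_insert, List.mem_append, List.mem_singleton]
      rintro y (rfl | hy)
      exacts [Or.inr (Or.inr rfl), Or.inl (hsL y hy)]

theorem Coherent.union_singleton [Finite α] {X : Set α} {a : α} (hX : fn.Coherent X)
    (ha : ∀ B, fn.N B a → (X ∩ B).Nonempty) : fn.Coherent (X ∪ {a}) := by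
  obtain ⟨L, hL, hLX, hXL⟩ := hX.exists_supported_cover
  rintro x (hx | rfl)
  · exact (hX x hx).mono Set.subset_union_left
  · refine ⟨Or.inr rfl, L ++ [x], powerfulSeq_iff.2 ⟨⟨L, rfl⟩, ?_, ?_⟩⟩
    · simp only [List.mem_append, List.mem_singleton]
      rintro b (hb | rfl)
      exacts [Or.inl (hLX b hb), Or.inr rfl]
    · refine supported_append_singleton_iff.2 ⟨hL, fun B hB => ?_⟩
      obtain ⟨b, hbX, hbB⟩ := ha B hB
      exact ⟨b, hXL b hbX, hbB⟩

theorem exists_attacker_of_mem_discardedAtt {X : Set α} {a : α} (hX : fn.ConflictFree X)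
    (hcoh : fn.Coherent (X ∪ {a})) (ha : a ∈ fn.discardedAtt X) : ∃ e ∈ X, fn.R e a := by
  obtain ⟨c, hc | rfl, e, he, hec⟩ := ha _ hcoh (Or.inr rfl)
  · exact absurd ⟨e, he, c, hc, hec⟩ hX
  · exact ⟨e, he, hec⟩

theorem discardedAtt_subset_compl {X : Set α} (hX : fn.StronglyCoherent X) :
    fn.discardedAtt X ⊆ Xᶜ := by
  intro a ha haX
  obtain ⟨c, hc, e, he, hec⟩ := ha X hX.2 haX
  exact hX.1 ⟨e, he, c, hc, hec⟩

theorem deactivated_subset_compl {X : Set α} (hX : fn.StronglyCoherent X) :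
    fn.deactivated X ⊆ Xᶜ := by
  rintro a (⟨e, he, hea⟩ | ⟨B, hB, hXB⟩) haX
  · exact hX.1 ⟨e, he, a, haX, hea⟩
  · exact ((hX.2 a haX).inter_nonempty_of_N hB).ne_empty hXB

theorem compl_subset_discardedAtt {X : Set α} (h : Xᶜ ⊆ fn.deactivated X) :
    Xᶜ ⊆ fn.discardedAtt X := by
  intro a ha C hC haC
  obtain ⟨-, G, hG⟩ := hC a haC
  obtain ⟨⟨L, rfl⟩, hGC, hGS⟩ := powerfulSeq_iff.1 hG
  obtain ⟨g, hg, hgX, hgB⟩ := hGS.exists_notMem_forall_inter_nonempty ⟨a, by simp, ha⟩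
  rcases h hgX with ⟨e, he, heg⟩ | ⟨B, hB, hXB⟩
  · exact ⟨g, hGC g hg, e, he, heg⟩
  · exact absurd hXB (hgB B hB).ne_empty

theorem compl_subset_deactivated [Finite α] {X : Set α} (hX : fn.StronglyCoherent X)
    (h : Xᶜ ⊆ fn.discardedAtt X) : Xᶜ ⊆ fn.deactivated X := by
  intro a ha
  by_contra hna
  have hnec : ∀ B, fn.N B a → (X ∩ B).Nonempty := fun B hB =>
    Set.nonempty_iff_ne_empty.2 fun hXB => hna (Or.inr ⟨B, hB, hXB⟩)
  obtain ⟨e, he, hea⟩ :=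
    exists_attacker_of_mem_discardedAtt hX.1 (hX.2.union_singleton hnec) (h ha)
  exact hna (Or.inl ⟨e, he, hea⟩)

theorem StronglyCoherent.admissible {X : Set α} (hX : fn.StronglyCoherent X)
    (h : Xᶜ ⊆ fn.discardedAtt X) : fn.Admissible X := by
  refine ⟨hX, fun a ha => ⟨?_, fun b hba => h fun hb => hX.1 ⟨b, hb, a, ha, hba⟩⟩⟩
  rw [Set.union_eq_self_of_subset_right (Set.singleton_subset_iff.2 ha)]
  exact hX.2

theorem mem_of_defends {X : Set α} {a : α} (hX : fn.ConflictFree X)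
    (hd : fn.discardedAtt X = Xᶜ) (ha : fn.Defends X a) : a ∈ X := by
  by_contra haX
  obtain ⟨e, he, hea⟩ := exists_attacker_of_mem_discardedAtt hX ha.1 (hd ▸ haX)
  exact (hd ▸ ha.2 e hea) he

end Dialectical.AFN

open Dialectical in
/-- in an AFN, `X` is stable (complete with `X⁺ = A \\ X`) iff `X` is
strongly coherent with `X^att = A \\ X`. -/
theorem afn_stable_iff_stronglyCoherent_discarded
    {α : Type} [Fintype α] (fn : AFN α) (X : Set α) :
    fn.Stable X ↔ fn.StableAtt X := by
  constructor
  · rintro ⟨hcomplete, hdeact⟩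
    have hX := hcomplete.1.1
    exact ⟨hX, (fn.discardedAtt_subset_compl hX).antisymm
      (fn.compl_subset_discardedAtt hdeact.symm.subset)⟩
  · rintro ⟨hX, hdisc⟩
    exact ⟨⟨hX.admissible hdisc.symm.subset, fun a ha => fn.mem_of_defends hX.1 hdisc ha⟩,
      (fn.deactivated_subset_compl hX).antisymm
        (fn.compl_subset_deactivated hX hdisc.symm.subset)⟩
end

section
/- Let SF = (A, R) be a SETAF and ADF^SF its corresponding ADF. A conflict-free set of arguments X ⊆ A defends an argument a ∈ A in SF if and only if a is decisively in w.r.t. the standard range v_X of X in ADF^SF. -/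
open Classical

universe u

/-!
In the ADF of a SETAF an argument is decisively in w.r.t. `v` exactly when `v` falsifies a
member of every attacking set, so it suffices that the f-part of the standard range of `X` is the
SETAF-discarded set of `X`. Every partially acyclic evaluation for `b` uses a minimal decisively
in interpretation for `b`, which falsifies a member of any attack `T ⊆ X` on `b`. Conversely, if
every attack on `b` leaves `X`, a `⊆`-minimal set outside `X` hitting these attacks (it exists by
finiteness) is a minimal decisively in interpretation for `b` with empty t-part, and the one-step
evaluation `[b]` built from it avoids `X`. Conflict-freeness makes the discarded set disjoint
from `X`.
-/

namespace Dialectical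

section Interp

variable {α : Type*}

@[simp]
lemma tset_mkInterp (T F : Set α) : tset (mkInterp T F) = T := by
  ext x
  by_cases hT : x ∈ T <;> simp [tset, mkInterp, hT]

@[simp]
lemma fset_mkInterp (T F : Set α) : fset (mkInterp T F) = F \ T := by
  ext x
  by_cases hT : x ∈ T <;> by_cases hF : x ∈ F <;> simp [fset, mkInterp, hT, hF]

lemma exists_completion_tset (v : Interp α) (Z : Set α) :
    ∃ w, Completion v w (idom v ∪ Z) ∧ ∀ x ∈ Z, x ∉ fset v → x ∈ tset w := by
  refine ⟨fun x => if x ∈ idom v then v x else if x ∈ Z then some true else none,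
    ⟨?_, fun x hx => if_pos hx⟩, fun x hxZ hxf => ?_⟩
  · ext x
    by_cases hv : x ∈ idom v <;> by_cases hZ : x ∈ Z <;> simp_all [idom]
  · rcases hvx : v x with _ | _ | _ <;> simp_all [idom, tset, fset]

end Interp

namespace ADF

variable {α : Type*} (D : ADF α)

lemma PAEval.exists_minDecIn_fset_subset {X : Set α} {x : α} {Fs : Set α} {G : List α}
    {B : Set α} (h : D.PAEval X x Fs G B) : ∃ v, D.MinDecIn v x ∧ fset v ⊆ B := by
  obtain ⟨pd, hpd, -, -, hxX, -, -, hFs, hG, hGnil, hGlast, -, -, -, rfl⟩ := h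
  have hx : x ∈ Fs ∨ x ∈ G := by
    by_cases hnil : G = []
    · exact .inl (hGnil hnil)
    · exact .inr (List.mem_of_mem_getLast? (hGlast hnil))
  obtain ⟨v, hv⟩ := Option.ne_none_iff_exists'.mp (hx.elim (hFs x) (hG x))
  refine ⟨v, ((hpd.1 x hxX).1 v hv).1, fun b hb => ?_⟩
  rcases hx with hx | hx
  · exact .inl (Set.mem_biUnion hx ⟨v, hv, hb⟩)
  · exact .inr (Set.mem_biUnion (s := {c | c ∈ G}) hx ⟨v, hv, hb⟩)

lemma maxSound_univ_of_minDecIn {f : α → Interp α} (hf : ∀ a, D.MinDecIn (f a) a) :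
    D.MaxSound Set.univ (fun a => some (f a)) := by
  refine ⟨fun a _ => ⟨fun v hv => ?_, fun h => absurd h (Option.some_ne_none _)⟩, ?_⟩
  · cases Option.some_injective _ hv
    exact ⟨hf a, Set.subset_univ _⟩
  · rintro ⟨X'', pd', -, -, hlt, -, -⟩
    exact hlt.2 (fun x _ => ⟨Set.mem_univ x, Option.some_ne_none _⟩)

lemma paEval_singleton {pd : α → Option (Interp α)} (hpd : D.MaxSound Set.univ pd) {x : α}
    {v : Interp α} (hx : pd x = some v) (hv : tset v = ∅) :
    D.PAEval Set.univ x ∅ [x] (fset v) := by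
  have hpdF : pdF pd x = fset v := by
    ext b
    simp [pdF, hx]
  refine ⟨pd, hpd, by simp, by simp, Set.mem_univ x, Set.empty_subset _, by simp,
    by simp, by simp [hx], by simp, by simp, fun i hi => ?_, by simp, by simp, ?_⟩
  · obtain rfl : i = 0 := by simpa using hi
    intro b ⟨v', hv', hb⟩
    change pd x = some v' at hv'
    rw [hx, Option.some_inj] at hv'
    subst hv'
    simp [hv] at hb
  · simp [hpdF]

end ADF

namespace SETAF

variable {α : Type*} (sf : SETAF α)

lemma toADF_decisivelyIn_iff {v : Interp α} {c : α} :
    sf.toADF.DecisivelyIn v c ↔ ∀ S, sf.R S c → ∃ s ∈ S, s ∈ fset v := by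
  constructor
  · intro hdec S hS
    -- the worst completion of `v` makes every parent of `c` that `v` does not falsify true
    obtain ⟨w, hw, htw⟩ := exists_completion_tset v (sf.toADF.par c)
    have hin := hdec w hw
    simp only [ADF.evalCond, toADF, decide_eq_true_eq] at hin
    by_contra! hS'
    exact hin ⟨S, hS, fun s hs => ⟨htw s ⟨S, hs, hS⟩ (hS' s hs), S, hs, hS⟩⟩
  · rintro hhit w hw
    simp only [ADF.evalCond, toADF, decide_eq_true_eq]
    rintro ⟨S, hS, hSt⟩
    obtain ⟨s, hsS, hsf⟩ := hhit S hS
    have hws : w s = v s := hw.2 s (by simp_all [idom, fset])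
    have hst : w s = some true := (hSt hsS).1
    simp_all [fset]

lemma exists_minDecIn_fset_subset [Finite α] {c : α} {F₀ : Set α}
    (hF₀ : ∀ S, sf.R S c → ∃ s ∈ S, s ∈ F₀) :
    ∃ v, sf.toADF.MinDecIn v c ∧ tset v = ∅ ∧ fset v ⊆ F₀ := by
  let Hits : Set α → Prop := fun F => F ⊆ F₀ ∧ ∀ S, sf.R S c → ∃ s ∈ S, s ∈ F
  obtain ⟨F, -, hF⟩ := exists_minimal_le_of_wellFoundedLT Hits F₀ ⟨subset_rfl, hF₀⟩
  refine ⟨mkInterp ∅ F, ⟨?_, fun w hw htw hfw => ?_⟩, by simp, by simpa using hF.prop.1⟩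
  · simpa [toADF_decisivelyIn_iff] using hF.prop.2
  · simp only [tset_mkInterp, fset_mkInterp, Set.sdiff_empty, Set.subset_empty_iff] at htw hfw ⊢
    have hHits : Hits (fset w) := ⟨hfw.trans hF.prop.1, (sf.toADF_decisivelyIn_iff).1 hw⟩
    exact ⟨htw, hF.eq_of_le hHits hfw⟩

lemma discarded_subset_stdDiscarded (X : Set α) :
    sf.discarded X ⊆ sf.toADF.stdDiscarded X := by
  rintro b ⟨T, hTX, hT⟩ Fs G B hB
  obtain ⟨v, hv, hvB⟩ := hB.exists_minDecIn_fset_subset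
  obtain ⟨t, htT, htv⟩ := (sf.toADF_decisivelyIn_iff).1 hv.1 T hT
  exact ⟨t, hvB htv, hTX htT⟩

lemma stdDiscarded_subset_discarded [Finite α] (X : Set α) :
    sf.toADF.stdDiscarded X ⊆ sf.discarded X := by
  intro b hb
  by_contra hbX
  have hF₀ : ∀ c, ∀ S, sf.R S c → ∃ s ∈ S, s ∈ (if c = b then Xᶜ else Set.univ) := by
    intro c S hS
    split_ifs with hc
    · subst hc
      by_contra! hSX
      exact hbX ⟨S, fun s hs => by simpa using hSX s hs, hS⟩
    · obtain ⟨s, hs⟩ := sf.nonempty_of_R S c hS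
      exact ⟨s, hs, Set.mem_univ s⟩
  choose f hf htf hff using fun c => sf.exists_minDecIn_fset_subset (hF₀ c)
  have hEval := sf.toADF.paEval_singleton (sf.toADF.maxSound_univ_of_minDecIn hf) rfl (htf b)
  obtain ⟨t, htB, htX⟩ := hb ∅ [b] _ hEval
  simpa [htX] using hff b htB

lemma toADF_stdDiscarded [Finite α] (X : Set α) :
    sf.toADF.stdDiscarded X = sf.discarded X :=
  (sf.stdDiscarded_subset_discarded X).antisymm (sf.discarded_subset_stdDiscarded X)

lemma fset_toADF_stdRange [Finite α] {X : Set α} (hX : sf.ConflictFree X) :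
    fset (sf.toADF.stdRange X) = sf.discarded X := by
  have hdisj : Disjoint (sf.discarded X) X :=
    Set.disjoint_left.2 fun b ⟨S, hSX, hS⟩ hbX => hX ⟨S, hSX, b, hbX, hS⟩
  simp [ADF.stdRange, toADF_stdDiscarded, hdisj.sdiff_eq_left]

end SETAF

end Dialectical

open Dialectical in
/-- a conflict-free set defends `a` in the SETAF iff `a` is decisively in
w.r.t. the standard range of `X` in the corresponding ADF. -/
theorem setaf_toADF_defends_iff_decisivelyIn
    {α : Type} [Fintype α] (sf : SETAF α) (X : Set α)
    (h : sf.ConflictFree X) (a : α) :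
    sf.Defends X a ↔ sf.toADF.DecisivelyIn (sf.toADF.stdRange X) a := by
  rw [SETAF.toADF_decisivelyIn_iff, SETAF.fset_toADF_stdRange sf h]
  rfl
end
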